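/- Let X be a proper, locally connected metric measure space, 1 ≤ p < ∞, and let Ω ⊆ X be a bounded domain which is finitely connected at the boundary. Then for every E ⊆ clΩ, bCp(Φ⁻¹(E);Ω_M) = bCp(E;Ω). -/

import Mathlib

open Set MeasureTheory Filter ENNReal NNReal Metric Topology

noncomputable section

/-- Extended absolute value of the "difference" of two extended reals; with Mathlib's
`EReal` subtraction conventions, `erealAbs (a - b) = ∞` whenever both `a` and `b`
are infinite, matching the convention for the upper gradient inequality. -/
def erealAbs (a : EReal) : ℝ≥0∞ :=
  if a = ⊤ ∨ a = ⊥ then ⊤ else ENNReal.ofReal |a.toReal|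

/-- Variation of `γ` over `[a,b]` computed with respect to an arbitrary
distance-like function `ρ`, as a supremum over partitions
`a = t 0 ≤ t 1 ≤ ⋯ ≤ t n = b`. -/
def variationWith {Y : Type*} (ρ : Y → Y → ℝ≥0∞) (γ : ℝ → Y) (a b : ℝ) : ℝ≥0∞ :=
  ⨆ P ∈ {P : ℕ × (ℕ → ℝ) |
      Monotone P.2 ∧ (∀ i, P.2 i ∈ Set.Icc a b) ∧ P.2 0 = a ∧ P.2 P.1 = b},
    ∑ i ∈ Finset.range P.1, ρ (γ (P.2 i)) (γ (P.2 (i + 1)))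

/-- `γ : [0,L] → Y` is parameterized by arc length with respect to `ρ`. -/
def IsArcLengthParamWith {Y : Type*} (ρ : Y → Y → ℝ≥0∞) (γ : ℝ → Y) (L : ℝ) : Prop :=
  ∀ s t : ℝ, s ∈ Set.Icc 0 L → t ∈ Set.Icc 0 L → s ≤ t →
    variationWith ρ γ s t = ENNReal.ofReal (t - s)

/-- `g` is an upper gradient of `f` on `S` with respect to the distance `ρ`:
for every (nonconstant, compact, rectifiable) curve in `S` parameterized by
arc length, the upper gradient inequality holds. -/
def IsUpperGradientWith {Y : Type*} (ρ : Y → Y → ℝ≥0∞) (S : Set Y)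
    (g : Y → ℝ≥0∞) (f : Y → EReal) : Prop :=
  ∀ (γ : ℝ → Y) (L : ℝ), 0 < L → Set.MapsTo γ (Set.Icc 0 L) S →
    IsArcLengthParamWith ρ γ L →
    erealAbs (f (γ L) - f (γ 0)) ≤ ∫⁻ t in Set.Icc 0 L, g (γ t)

/-- Upper gradient on `S` with respect to the ambient metric. -/
def IsUpperGradientOn {Y : Type*} [PseudoEMetricSpace Y] (S : Set Y)
    (g : Y → ℝ≥0∞) (f : Y → EReal) : Prop :=
  IsUpperGradientWith (fun x y => edist x y) S g f

/-- The `p`-th power of the Newtonian norm of `f` on `S` with respect to the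
measure `m` and the distance `ρ`:
`∫_S |f|^p dm + inf {∫_S g^p dm : g a Borel upper gradient of f on S w.r.t. ρ}`. -/
def npEnergyWith {Y : Type*} [MeasurableSpace Y] (m : Measure Y) (p : ℝ)
    (ρ : Y → Y → ℝ≥0∞) (S : Set Y) (f : Y → ℝ) : ℝ≥0∞ :=
  (∫⁻ y in S, ENNReal.ofReal |f y| ^ p ∂m) +
    ⨅ g ∈ {g : Y → ℝ≥0∞ | Measurable g ∧
        IsUpperGradientWith ρ S g (fun y => (f y : EReal))},
      ∫⁻ y in S, g y ^ p ∂m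

/-- The `p`-th power of the Newtonian norm of `f` on `S ⊆ Y` (w.r.t. the ambient metric). -/
def npEnergyOn {Y : Type*} [PseudoEMetricSpace Y] [MeasurableSpace Y]
    (m : Measure Y) (p : ℝ) (S : Set Y) (f : Y → ℝ) : ℝ≥0∞ :=
  npEnergyWith m p (fun x y => edist x y) S f

/-- `f ∈ N^{1,p}(S, m)`. -/
def MemNp {Y : Type*} [PseudoEMetricSpace Y] [MeasurableSpace Y]
    (m : Measure Y) (p : ℝ) (S : Set Y) (f : Y → ℝ) : Prop :=
  Measurable f ∧ npEnergyOn m p S f ≠ ⊤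

/-- The Sobolev capacity `C_p(E; S)` of `E ⊆ S`. -/
def CpOn {Y : Type*} [PseudoEMetricSpace Y] [MeasurableSpace Y]
    (m : Measure Y) (p : ℝ) (S E : Set Y) : ℝ≥0∞ :=
  ⨅ u ∈ {u : Y → ℝ | MemNp m p S u ∧ ∀ x ∈ E, u x = 1}, npEnergyOn m p S u

/-- The capacity `bC_p(E; S)` of `E ⊆ closure S`. -/
def bCpOn {Y : Type*} [PseudoEMetricSpace Y] [MeasurableSpace Y]
    (m : Measure Y) (p : ℝ) (S E : Set Y) : ℝ≥0∞ :=
  ⨅ u ∈ {u : Y → ℝ | MemNp m p S u ∧ (∀ x ∈ E ∩ S, 1 ≤ u x) ∧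
      ∀ x ∈ E ∩ (closure S \ S),
        (1 : EReal) ≤ Filter.liminf (fun y => (u y : EReal)) (nhdsWithin x S)},
    npEnergyOn m p S u

/-- The Mazurkiewicz distance on `S`. -/
def mazDist {Y : Type*} [PseudoEMetricSpace Y] (S : Set Y) (x y : Y) : ℝ≥0∞ :=
  ⨅ E ∈ {E : Set Y | E ⊆ S ∧ IsConnected E ∧ x ∈ E ∧ y ∈ E}, EMetric.diam E

/-- The inner metric on `S`: the infimum of lengths of curves in `S` joining
`x` and `y` (`∞` if there are none). -/
def innerDist {Y : Type*} [PseudoEMetricSpace Y] (S : Set Y) (x y : Y) : ℝ≥0∞ :=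
  ⨅ c ∈ {c : (ℝ → Y) × ℝ × ℝ | c.2.1 ≤ c.2.2 ∧
      ContinuousOn c.1 (Set.Icc c.2.1 c.2.2) ∧
      Set.MapsTo c.1 (Set.Icc c.2.1 c.2.2) S ∧ c.1 c.2.1 = x ∧ c.1 c.2.2 = y},
    eVariationOn c.1 (Set.Icc c.2.1 c.2.2)

/-- `S` is `L`-quasiconvex: any two points of `S` can be joined by a curve in `S`
of length at most `L` times their distance. -/
def LQuasiconvexOn {Y : Type*} [PseudoMetricSpace Y] (S : Set Y) (L : ℝ) : Prop :=
  ∀ x ∈ S, ∀ y ∈ S, ∃ (γ : ℝ → Y) (a b : ℝ), a ≤ b ∧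
    ContinuousOn γ (Set.Icc a b) ∧ Set.MapsTo γ (Set.Icc a b) S ∧
    γ a = x ∧ γ b = y ∧ eVariationOn γ (Set.Icc a b) ≤ ENNReal.ofReal (L * dist x y)

/-- A quasiconvex metric space. -/
def QuasiconvexSpace (Y : Type*) [PseudoMetricSpace Y] : Prop :=
  ∃ L : ℝ, 1 ≤ L ∧ LQuasiconvexOn (Set.univ : Set Y) L

/-- A bounded domain: a bounded nonempty open connected set. -/
def IsBoundedDomain {Y : Type*} [PseudoMetricSpace Y] (Ω : Set Y) : Prop :=
  IsOpen Ω ∧ IsConnected Ω ∧ Bornology.IsBounded Ω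

/-- `Ω` is finitely connected at the boundary. -/
def FinConnAtBoundary {Y : Type*} [MetricSpace Y] (Ω : Set Y) : Prop :=
  ∀ x₀ ∈ frontier Ω, ∀ r : ℝ, 0 < r → ∃ G : Set Y, IsOpen G ∧ x₀ ∈ G ∧
    G ⊆ Metric.ball x₀ r ∧
    {C : Set Y | ∃ x ∈ G ∩ Ω, C = connectedComponentIn (G ∩ Ω) x}.Finite

/-- The standing assumption on the measure: every ball has positive finite measure. -/
def BallRegular {Y : Type*} [PseudoMetricSpace Y] [MeasurableSpace Y]
    (m : Measure Y) : Prop :=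
  ∀ (x : Y) (r : ℝ), 0 < r → 0 < m (Metric.ball x r) ∧ m (Metric.ball x r) < ⊤

/-- The measure `m` is (globally) doubling. -/
def DoublingMeasure' {Y : Type*} [PseudoMetricSpace Y] [MeasurableSpace Y]
    (m : Measure Y) : Prop :=
  ∃ C : ℝ≥0, 0 < C ∧ ∀ (x : Y) (r : ℝ), 0 < r →
    m (Metric.ball x (2 * r)) ≤ C * m (Metric.ball x r)

/-- `(Y, m)` supports a `p`-Poincaré inequality. -/
def PoincareInequality {Y : Type*} [MetricSpace Y] [MeasurableSpace Y]
    (m : Measure Y) (p : ℝ) : Prop :=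
  ∃ C lam : ℝ, 0 < C ∧ 1 ≤ lam ∧
    ∀ (x : Y) (r : ℝ), 0 < r → ∀ f : Y → ℝ, Integrable f m →
      ∀ g : Y → ℝ≥0∞, Measurable g →
        IsUpperGradientOn (Set.univ : Set Y) g (fun y => (f y : EReal)) →
        ENNReal.ofReal (⨍ y in Metric.ball x r,
            |f y - ⨍ z in Metric.ball x r, f z ∂m| ∂m) ≤
          ENNReal.ofReal (C * Metric.diam (Metric.ball x r)) *
            ((∫⁻ y in Metric.ball x (lam * r), g y ^ p ∂m) /
              m (Metric.ball x (lam * r))) ^ (1 / p)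

/-
Φ identifies `Φ⁻¹(Ω)` with `Ω`, and test functions are transported in both directions:
`u ↦ u ∘ Φ` and `u' ↦ u' ∘ ι` (extended by zero off `Ω`).
First, a curve in `Ω` has the same length for `d` and for `d_M`, since each subarc is a
connected set whose diameter is at most its length; so arc-length parametrized curves, hence upper
gradients and Newtonian norms, correspond. Second, finite connectedness at the boundary makes
every sequence of `Ω` converging to a point `x ∈ ∂Ω` totally bounded for `d_M`; a
`d_M`-convergent subsequence then has its limit in `∂_M Ω ∩ Φ⁻¹(x)`, so the boundary `liminf`
conditions at `∂Ω` and at `∂_M Ω` correspond. Finally, local connectedness makes `(Ω, d) → (Ω, d_M)`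
continuous, so that `Φ⁻¹(Ω)` is exactly the copy of `Ω` in `clΩ_M`; and since `Ω` is
σ-compact, that copy is a Borel set carrying all of `ν`.
-/

section Variation

variable {Y W : Type*}

lemma le_variationWith (ρ : Y → Y → ℝ≥0∞) (γ : ℝ → Y) {a b : ℝ} (hab : a ≤ b) :
    ρ (γ a) (γ b) ≤ variationWith ρ γ a b := by
  unfold variationWith
  refine le_iSup₂_of_le (1, fun i => if i = 0 then a else b) ⟨?_, fun i => ?_, rfl, rfl⟩
    (by simp)
  · exact monotone_nat_of_le_succ fun i => by dsimp only; split_ifs <;> simp_all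
  · dsimp only
    split_ifs <;> simp [hab]

lemma variationWith_le_variationWith {ρ₁ : Y → Y → ℝ≥0∞} {ρ₂ : W → W → ℝ≥0∞}
    {γ : ℝ → Y} {δ : ℝ → W} {a b : ℝ}
    (h : ∀ s ∈ Icc a b, ∀ t ∈ Icc a b, ρ₁ (γ s) (γ t) ≤ ρ₂ (δ s) (δ t)) :
    variationWith ρ₁ γ a b ≤ variationWith ρ₂ δ a b :=
  iSup₂_mono fun _ hP => Finset.sum_le_sum fun i _ => h _ (hP.2.1 i) _ (hP.2.1 (i + 1))

lemma variationWith_congr {ρ₁ : Y → Y → ℝ≥0∞} {ρ₂ : W → W → ℝ≥0∞}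
    {γ : ℝ → Y} {δ : ℝ → W} {a b : ℝ}
    (h : ∀ s ∈ Icc a b, ∀ t ∈ Icc a b, ρ₁ (γ s) (γ t) = ρ₂ (δ s) (δ t)) :
    variationWith ρ₁ γ a b = variationWith ρ₂ δ a b :=
  le_antisymm (variationWith_le_variationWith fun s hs t ht => (h s hs t ht).le)
    (variationWith_le_variationWith fun s hs t ht => (h s hs t ht).ge)

lemma variationWith_edist_eq_eVariationOn [PseudoEMetricSpace Y] (γ : ℝ → Y) {a b : ℝ}
    (hab : a ≤ b) :
    variationWith (fun x y => edist x y) γ a b = eVariationOn γ (Icc a b) := by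
  refine le_antisymm (iSup₂_le fun P hP => ?_) (iSup_le fun ⟨n, u, hu, hus⟩ => ?_)
  · simpa only [edist_comm] using eVariationOn.sum_le (f := γ) (n := P.1) hP.1 hP.2.1
  -- a monotone sequence in `[a, b]` becomes a partition of `[a, b]` once `a` and `b` are added
  let v : ℕ → ℝ := fun i => if i = 0 then a else if i ≤ n + 1 then u (i - 1) else b
  have hv : Monotone v := monotone_nat_of_le_succ fun i => by
    simp only [v]
    split_ifs <;> first
      | contradiction | omega | exact le_rfl | exact (hus _).1 | exact (hus _).2 | exact hab
      | exact hu (by omega)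
  have hvab : ∀ i, v i ∈ Icc a b := fun i => by
    simp only [v]
    split_ifs <;> first | exact hus _ | exact ⟨le_rfl, hab⟩ | exact ⟨hab, le_rfl⟩
  refine le_iSup₂_of_le (f := fun (P : ℕ × (ℕ → ℝ)) _ =>
    ∑ i ∈ Finset.range P.1, edist (γ (P.2 i)) (γ (P.2 (i + 1)))) (n + 2, v)
    ⟨hv, hvab, rfl, by simp [v]⟩ ?_
  calc ∑ i ∈ Finset.range n, edist (γ (u (i + 1))) (γ (u i))
      = ∑ i ∈ Finset.range n, edist (γ (v (i + 1))) (γ (v (i + 1 + 1))) :=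
        Finset.sum_congr rfl fun i hi => by
          have := Finset.mem_range.1 hi
          simp [v, edist_comm, show i + 1 ≤ n + 1 by omega, show i + 1 + 1 ≤ n + 1 by omega]
    _ ≤ ∑ i ∈ Finset.range (n + 1), edist (γ (v (i + 1))) (γ (v (i + 1 + 1))) :=
        Finset.sum_le_sum_of_subset (Finset.range_subset_range.2 n.le_succ)
    _ ≤ ∑ i ∈ Finset.range (n + 2), edist (γ (v i)) (γ (v (i + 1))) := by
        rw [Finset.sum_range_succ' _ (n + 1)]
        exact le_self_add

lemma sum_eVariationOn_Icc_le [PseudoEMetricSpace Y] (γ : ℝ → Y) {v : ℕ → ℝ}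
    (hv : Monotone v) (n : ℕ) :
    ∑ i ∈ Finset.range n, eVariationOn γ (Icc (v i) (v (i + 1))) ≤
      eVariationOn γ (Icc (v 0) (v n)) := by
  induction n with
  | zero => simp
  | succ n ih =>
    have h := eVariationOn.Icc_add_Icc γ (s := univ) (hv n.zero_le) (hv n.le_succ) (mem_univ _)
    simp only [univ_inter] at h
    rw [Finset.sum_range_succ, ← h]
    gcongr

lemma IsArcLengthParamWith.lipschitzOnWith [PseudoEMetricSpace Y] {γ : ℝ → Y} {L : ℝ}
    (h : IsArcLengthParamWith (fun x y => edist x y) γ L) : LipschitzOnWith 1 γ (Icc 0 L) := by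
  intro s hs t ht
  wlog hst : s ≤ t generalizing s t
  · rw [edist_comm, edist_comm s]
    exact this ht hs (le_of_not_ge hst)
  calc edist (γ s) (γ t) ≤ variationWith (fun x y => edist x y) γ s t := le_variationWith _ γ hst
    _ = ENNReal.ofReal (t - s) := h s t hs ht hst
    _ = 1 * edist s t := by
        rw [one_mul, edist_dist, Real.dist_eq, abs_sub_comm,
          abs_of_nonneg (sub_nonneg.2 hst)]

end Variation

section Mazurkiewicz

variable {Y W : Type*} [PseudoEMetricSpace Y]

lemma edist_le_mazDist (S : Set Y) (x y : Y) : edist x y ≤ mazDist S x y :=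
  le_iInf₂ fun _ hE => edist_le_ediam_of_mem hE.2.2.1 hE.2.2.2

lemma mazDist_le_ediam {S E : Set Y} {x y : Y} (hES : E ⊆ S) (hE : IsConnected E)
    (hx : x ∈ E) (hy : y ∈ E) : mazDist S x y ≤ ediam E :=
  iInf₂_le E ⟨hES, hE, hx, hy⟩

lemma eventually_mazDist_lt [LocallyConnectedSpace Y] {S : Set Y} (hS : IsOpen S) {x : Y}
    (hx : x ∈ S) {ε : ℝ≥0∞} (hε : 0 < ε) : ∀ᶠ y in 𝓝 x, mazDist S y x < ε := by
  obtain ⟨δ, hδ, hδε⟩ := exists_between hε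
  obtain ⟨V, hVsub, hVo, hxV, hVconn⟩ :=
    locallyConnectedSpace_iff_subsets_isOpen_isConnected.1 ‹_› x (S ∩ eball x (δ / 2))
      (inter_mem (hS.mem_nhds hx) (eball_mem_nhds x (ENNReal.half_pos hδ.ne')))
  filter_upwards [hVo.mem_nhds hxV] with y hy
  calc mazDist S y x ≤ ediam V := mazDist_le_ediam (hVsub.trans inter_subset_left) hVconn hy hxV
    _ ≤ ediam (eball x (δ / 2)) := ediam_mono (hVsub.trans inter_subset_right)
    _ ≤ 2 * (δ / 2) := ediam_eball_le
    _ = δ := ENNReal.mul_div_cancel two_ne_zero ofNat_ne_top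
    _ < ε := hδε

lemma mazDist_le_eVariationOn {S : Set Y} {η : ℝ → Y} {a b : ℝ} (hab : a ≤ b)
    (hη : ContinuousOn η (Icc a b)) (hS : MapsTo η (Icc a b) S) :
    mazDist S (η a) (η b) ≤ eVariationOn η (Icc a b) :=
  (mazDist_le_ediam hS.image_subset ((isConnected_Icc hab).image η hη)
    (mem_image_of_mem η (left_mem_Icc.2 hab)) (mem_image_of_mem η (right_mem_Icc.2 hab))).trans
    (ediam_image_le_iff.2 fun _ hs _ ht => eVariationOn.edist_le η hs ht)

lemma variationWith_mazDist_eq {S : Set Y} {η : ℝ → Y} {a b : ℝ} (hab : a ≤ b)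
    (hη : ContinuousOn η (Icc a b)) (hS : MapsTo η (Icc a b) S) :
    variationWith (mazDist S) η a b = variationWith (fun x y => edist x y) η a b := by
  refine le_antisymm ?_ (variationWith_le_variationWith fun _ _ _ _ => edist_le_mazDist S _ _)
  rw [variationWith_edist_eq_eVariationOn η hab]
  refine iSup₂_le fun P ⟨hmono, hmem, h0, hn⟩ => ?_
  have hsub : ∀ i, Icc (P.2 i) (P.2 (i + 1)) ⊆ Icc a b := fun i =>
    Icc_subset_Icc (hmem i).1 (hmem (i + 1)).2
  calc ∑ i ∈ Finset.range P.1, mazDist S (η (P.2 i)) (η (P.2 (i + 1)))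
      ≤ ∑ i ∈ Finset.range P.1, eVariationOn η (Icc (P.2 i) (P.2 (i + 1))) :=
        Finset.sum_le_sum fun i _ =>
          mazDist_le_eVariationOn (hmono i.le_succ) (hη.mono (hsub i)) (hS.mono_left (hsub i))
    _ ≤ eVariationOn η (Icc a b) := by
        simpa only [h0, hn] using sum_eVariationOn_Icc_le η hmono P.1

lemma isArcLengthParamWith_iff_of_edist_eq_mazDist [PseudoEMetricSpace W] {S : Set Y}
    {η : ℝ → Y} {γ : ℝ → W} {L : ℝ} (hη : ContinuousOn η (Icc 0 L)) (hS : MapsTo η (Icc 0 L) S)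
    (h : ∀ s ∈ Icc 0 L, ∀ t ∈ Icc 0 L, edist (γ s) (γ t) = mazDist S (η s) (η t)) :
    IsArcLengthParamWith (fun x y => edist x y) γ L ↔
      IsArcLengthParamWith (fun x y => edist x y) η L := by
  have key : ∀ s ∈ Icc 0 L, ∀ t ∈ Icc 0 L, s ≤ t →
      variationWith (fun x y => edist x y) γ s t =
        variationWith (fun x y => edist x y) η s t := by
    intro s hs t ht hst
    have hsub : Icc s t ⊆ Icc 0 L := Icc_subset_Icc hs.1 ht.2
    rw [← variationWith_mazDist_eq hst (hη.mono hsub) (hS.mono_left hsub)]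
    exact variationWith_congr fun a ha b hb => h a (hsub ha) b (hsub hb)
  refine ⟨fun H s t hs ht hst => ?_, fun H s t hs ht hst => ?_⟩
  · rw [← key s hs t ht hst]
    exact H s t hs ht hst
  · rw [key s hs t ht hst]
    exact H s t hs ht hst

end Mazurkiewicz

lemma totallyBounded_of_forall_finite_cover {Y : Type*} [PseudoEMetricSpace Y] {s : Set Y}
    (h : ∀ ε > 0, ∃ c : Set (Set Y), c.Finite ∧ s ⊆ ⋃₀ c ∧ ∀ t ∈ c, ediam t < ε) :
    TotallyBounded s := by
  refine EMetric.totallyBounded_iff.2 fun ε hε => ?_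
  obtain ⟨c, hc, hsc, hdiam⟩ := h ε hε
  have := (hc.subset (sep_subset c Set.Nonempty)).to_subtype
  refine ⟨range fun t : {t ∈ c | t.Nonempty} => t.2.2.some, finite_range _, fun x hx => ?_⟩
  obtain ⟨t, htc, hxt⟩ := hsc hx
  let t' : {t ∈ c | t.Nonempty} := ⟨t, htc, x, hxt⟩
  exact mem_iUnion₂.2 ⟨_, mem_range_self t',
    (edist_le_ediam_of_mem hxt t'.2.2.some_mem).trans_lt (hdiam t htc)⟩

lemma IsSigmaCompact.measurableSet {Y : Type*} [TopologicalSpace Y] [T2Space Y]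
    [MeasurableSpace Y] [OpensMeasurableSpace Y] {s : Set Y} (hs : IsSigmaCompact s) :
    MeasurableSet s := by
  obtain ⟨K, hK, rfl⟩ := hs
  exact .iUnion fun n => (hK n).isClosed.measurableSet

lemma setLIntegral_range_eq {X Z : Type*} [MeasurableSpace X] [MeasurableSpace Z]
    {μ : Measure X} {ν : Measure Z} {Ω : Set X} {ι : Ω → Z} (hΩ : MeasurableSet Ω)
    (hι : Measurable ι) (hrange : MeasurableSet (range ι))
    (hν : ∀ A : Set Z, MeasurableSet A → ν A = μ (Subtype.val '' (ι ⁻¹' A)))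
    {F : Z → ℝ≥0∞} (hF : Measurable F) {H : X → ℝ≥0∞} (hFH : ∀ x : Ω, F (ι x) = H x) :
    ∫⁻ z in range ι, F z ∂ν = ∫⁻ x in Ω, H x ∂μ := by
  have hν' : ν = (μ.comap Subtype.val).map ι := Measure.ext fun A hA => by
    rw [Measure.map_apply hι hA, (MeasurableEmbedding.subtype_coe hΩ).comap_apply, hν A hA]
  rw [hν', setLIntegral_map hrange hF hι, preimage_range, Measure.restrict_univ,
    ← lintegral_subtype_comap hΩ]
  exact lintegral_congr hFH

lemma npEnergyOn_le_of_forall_isUpperGradientOn {Y Y' : Type*} [PseudoEMetricSpace Y]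
    [MeasurableSpace Y] [PseudoEMetricSpace Y'] [MeasurableSpace Y'] {m : Measure Y}
    {m' : Measure Y'} {p : ℝ} {S : Set Y} {S' : Set Y'} {f : Y → ℝ} {f' : Y' → ℝ}
    (hf : ∫⁻ y in S', ENNReal.ofReal |f' y| ^ p ∂m' ≤ ∫⁻ y in S, ENNReal.ofReal |f y| ^ p ∂m)
    (hg : ∀ g, Measurable g → IsUpperGradientOn S g (fun y => (f y : EReal)) →
      ∃ g', Measurable g' ∧ IsUpperGradientOn S' g' (fun y => (f' y : EReal)) ∧
        ∫⁻ y in S', g' y ^ p ∂m' ≤ ∫⁻ y in S, g y ^ p ∂m) :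
    npEnergyOn m' p S' f' ≤ npEnergyOn m p S f :=
  add_le_add hf <| le_iInf₂ fun g ⟨hgm, hgu⟩ =>
    let ⟨g', hg'm, hg'u, hle⟩ := hg g hgm hgu
    iInf₂_le_of_le g' ⟨hg'm, hg'u⟩ hle

section MazurkiewiczCompletion

variable {X Z : Type*} {Ω : Set X} {ι : Ω → Z} {Φ : Z → X}

lemma mapsTo_range_of_map_eq (hΦι : ∀ x : Ω, Φ (ι x) = x) : MapsTo Φ (range ι) Ω := by
  rintro _ ⟨x, rfl⟩
  rw [hΦι]
  exact x.2

variable [MetricSpace X] [MetricSpace Z]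

lemma continuous_of_edist_eq_mazDist [LocallyConnectedSpace X] (hΩ : IsOpen Ω)
    (hι : ∀ x y : Ω, edist (ι x) (ι y) = mazDist Ω x y) : Continuous ι := by
  refine continuous_iff_continuousAt.2 fun x => EMetric.tendsto_nhds.2 fun ε hε => ?_
  rw [nhds_subtype]
  exact ((eventually_mazDist_lt hΩ x.2 hε).comap _).mono fun y hy => (hι y x).trans_lt hy

lemma edist_eq_mazDist_of_mem_range (hι : ∀ x y : Ω, edist (ι x) (ι y) = mazDist Ω x y)
    (hΦι : ∀ x : Ω, Φ (ι x) = x) {z w : Z} (hz : z ∈ range ι) (hw : w ∈ range ι) :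
    edist z w = mazDist Ω (Φ z) (Φ w) := by
  obtain ⟨x, rfl⟩ := hz
  obtain ⟨y, rfl⟩ := hw
  rw [hΦι, hΦι, hι]

lemma map_eq_of_map_mem (hdense : DenseRange ι) (hι : Continuous ι) (hΦ : Continuous Φ)
    (hΦι : ∀ x : Ω, Φ (ι x) = x) {z : Z} (hz : Φ z ∈ Ω) : ι ⟨Φ z, hz⟩ = z := by
  have : (comap ι (𝓝 z)).NeBot := comap_neBot fun t ht => by
    obtain ⟨_, ⟨a, rfl⟩, ha⟩ := hdense.inter_nhds_nonempty ht
    exact ⟨a, ha⟩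
  have hz' : Tendsto ι (comap ι (𝓝 z)) (𝓝 z) := tendsto_comap
  have hval : Tendsto (fun a : Ω => (a : X)) (comap ι (𝓝 z)) (𝓝 (Φ z)) := by
    simpa only [Function.comp_def, hΦι] using (hΦ.tendsto z).comp hz'
  exact tendsto_nhds_unique ((hι.tendsto _).comp (tendsto_subtype_rng.2 hval)) hz'

lemma ediam_image_le_of_isConnected (hι : ∀ x y : Ω, edist (ι x) (ι y) = mazDist Ω x y)
    {C : Set X} (hCΩ : C ⊆ Ω) (hC : IsConnected C) :
    ediam (ι '' (Subtype.val ⁻¹' C)) ≤ ediam C :=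
  ediam_image_le_iff.2 fun x hx y hy => (hι x y).trans_le (mazDist_le_ediam hCΩ hC hx hy)

lemma totallyBounded_range_of_tendsto_frontier (hfc : FinConnAtBoundary Ω)
    (hι : ∀ x y : Ω, edist (ι x) (ι y) = mazDist Ω x y) {x : X} (hx : x ∈ frontier Ω)
    {y : ℕ → Ω} (hy : Tendsto (fun n => (y n : X)) atTop (𝓝 x)) :
    TotallyBounded (range (ι ∘ y)) := by
  refine totallyBounded_of_forall_finite_cover fun ε hε => ?_
  obtain ⟨r, -, hr0, hrε⟩ := ENNReal.lt_iff_exists_real_btwn.1 (ENNReal.half_pos hε.ne')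
  obtain ⟨G, hGo, hxG, hGr, hfin⟩ := hfc x hx r (ENNReal.ofReal_pos.1 hr0)
  obtain ⟨N, hN⟩ := eventually_atTop.1 (hy.eventually (hGo.mem_nhds hxG))
  -- the late terms lie in the finitely many components of `G ∩ Ω`, each of small `d_M`-diameter
  refine ⟨(fun C => ι '' (Subtype.val ⁻¹' C)) ''
      {C | ∃ x ∈ G ∩ Ω, C = connectedComponentIn (G ∩ Ω) x} ∪ (fun n => {ι (y n)}) '' Iio N,
    (hfin.image _).union ((finite_Iio N).image _), ?_, ?_⟩
  · rintro _ ⟨n, rfl⟩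
    rcases lt_or_ge n N with hn | hn
    · exact mem_sUnion_of_mem (mem_singleton _) (Or.inr ⟨n, hn, rfl⟩)
    · have hyn : (y n : X) ∈ G ∩ Ω := ⟨hN n hn, (y n).2⟩
      have hcc : y n ∈ Subtype.val ⁻¹' connectedComponentIn (G ∩ Ω) (y n) :=
        mem_connectedComponentIn hyn
      exact mem_sUnion_of_mem (mem_image_of_mem ι hcc)
        (Or.inl ⟨_, ⟨_, hyn, rfl⟩, rfl⟩)
  · rintro _ (⟨_, ⟨w, hw, rfl⟩, rfl⟩ | ⟨n, -, rfl⟩)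
    · calc ediam (ι '' (Subtype.val ⁻¹' connectedComponentIn (G ∩ Ω) w))
          ≤ ediam (connectedComponentIn (G ∩ Ω) w) :=
            ediam_image_le_of_isConnected hι
              ((connectedComponentIn_subset _ _).trans inter_subset_right)
              (isConnected_connectedComponentIn_iff.2 hw)
        _ ≤ ediam (eball x (ENNReal.ofReal r)) := by
            rw [eball_ofReal]
            exact ediam_mono ((connectedComponentIn_subset _ _).trans
              (inter_subset_left.trans hGr))
        _ ≤ 2 * ENNReal.ofReal r := ediam_eball_le
        _ < ε := ENNReal.mul_lt_of_lt_div' hrε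
    · simpa using hε

lemma exists_tendsto_subseq_of_tendsto_frontier [CompleteSpace Z] (hfc : FinConnAtBoundary Ω)
    (hι : ∀ x y : Ω, edist (ι x) (ι y) = mazDist Ω x y) (hΦ : Continuous Φ)
    (hΦι : ∀ x : Ω, Φ (ι x) = x) {x : X} (hx : x ∈ frontier Ω) {y : ℕ → Ω}
    (hy : Tendsto (fun n => (y n : X)) atTop (𝓝 x)) :
    ∃ z, Φ z = x ∧ ∃ φ : ℕ → ℕ, StrictMono φ ∧ Tendsto (ι ∘ y ∘ φ) atTop (𝓝 z) := by
  obtain ⟨z, -, φ, hφ, hz⟩ :=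
    ((totallyBounded_range_of_tendsto_frontier hfc hι hx hy).closure.isCompact_of_isClosed
      isClosed_closure).tendsto_subseq fun n => subset_closure (mem_range_self n)
  refine ⟨z, tendsto_nhds_unique ((hΦ.tendsto z).comp hz) ?_, φ, hφ, hz⟩
  simpa only [Function.comp_def, hΦι] using hy.comp hφ.tendsto_atTop

lemma le_liminf_extend_of_mem_frontier [CompleteSpace Z] (hΩ : IsOpen Ω)
    (hfc : FinConnAtBoundary Ω) (hι : ∀ x y : Ω, edist (ι x) (ι y) = mazDist Ω x y)
    (hΦ : Continuous Φ) (hΦι : ∀ x : Ω, Φ (ι x) = x) {u : Z → ℝ} {a : EReal} {x : X}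
    (hx : x ∈ closure Ω \ Ω)
    (hu : ∀ z, Φ z = x → z ∉ range ι → a ≤ liminf (fun w => (u w : EReal)) (𝓝[range ι] z)) :
    a ≤ liminf (fun y => ((Function.extend Subtype.val (u ∘ ι) 0 y : ℝ) : EReal)) (𝓝[Ω] x) := by
  rw [le_liminf_iff]
  intro c hc
  by_contra hev
  simp only [not_eventually, not_lt] at hev
  obtain ⟨ys, hys, hysc⟩ := exists_seq_forall_of_frequently (hev.and_eventually self_mem_nhdsWithin)
  let y : ℕ → Ω := fun n => ⟨ys n, (hysc n).2⟩
  obtain ⟨z, hzx, φ, hφ, hz⟩ := exists_tendsto_subseq_of_tendsto_frontier hfc hι hΦ hΦι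
    (by rwa [frontier, hΩ.interior_eq]) (tendsto_nhds_of_tendsto_nhdsWithin hys : Tendsto
      (fun n => (y n : X)) atTop (𝓝 x))
  have hzι : z ∉ range ι := by
    rintro ⟨w, rfl⟩
    exact hx.2 (hzx ▸ (hΦι w).symm ▸ w.2)
  have hzι' : Tendsto (ι ∘ y ∘ φ) atTop (𝓝[range ι] z) :=
    tendsto_nhdsWithin_iff.2 ⟨hz, .of_forall fun _ => mem_range_self _⟩
  have : liminf (fun w => (u w : EReal)) (𝓝[range ι] z) ≤ c := by
    refine hzι'.liminf_le_liminf_comp.trans (liminf_le_of_frequently_le' (.of_forall fun n => ?_))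
    show ((u ∘ ι) (y (φ n)) : EReal) ≤ c
    rw [← Subtype.val_injective.extend_apply (u ∘ ι) 0 (y (φ n))]
    exact (hysc (φ n)).1
  exact (hc.trans_le ((hu z hzx hzι).trans this)).false

lemma le_liminf_comp_of_le_liminf (hΦ : Continuous Φ) (hΦι : ∀ x : Ω, Φ (ι x) = x)
    {u : X → EReal} {a : EReal} {z : Z} (h : a ≤ liminf u (𝓝[Ω] (Φ z))) :
    a ≤ liminf (u ∘ Φ) (𝓝[range ι] z) :=
  h.trans (tendsto_nhdsWithin_iff.2 ⟨(hΦ.tendsto z).mono_left nhdsWithin_le_nhds,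
    eventually_nhdsWithin_of_forall (mapsTo_range_of_map_eq hΦι)⟩).liminf_le_liminf_comp

lemma IsUpperGradientOn.comp_of_edist_eq_mazDist
    (hι : ∀ x y : Ω, edist (ι x) (ι y) = mazDist Ω x y) (hΦ : LipschitzWith 1 Φ)
    (hΦι : ∀ x : Ω, Φ (ι x) = x) {g : X → ℝ≥0∞} {u : X → EReal} (h : IsUpperGradientOn Ω g u) :
    IsUpperGradientOn (range ι) (g ∘ Φ) (u ∘ Φ) := by
  intro γ L hL hγS hγ
  have hS := (mapsTo_range_of_map_eq hΦι).comp hγS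
  refine h (Φ ∘ γ) L hL hS ((isArcLengthParamWith_iff_of_edist_eq_mazDist ?_ hS fun s hs t ht =>
    edist_eq_mazDist_of_mem_range hι hΦι (hγS hs) (hγS ht)).1 hγ)
  exact hΦ.continuous.comp_continuousOn hγ.lipschitzOnWith.continuousOn

lemma IsUpperGradientOn.extend_of_edist_eq_mazDist
    (hι : ∀ x y : Ω, edist (ι x) (ι y) = mazDist Ω x y) {g : Z → ℝ≥0∞} {u : Z → ℝ}
    (h : IsUpperGradientOn (range ι) g (fun z => (u z : EReal))) :
    IsUpperGradientOn Ω (Function.extend Subtype.val (g ∘ ι) 0)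
      (fun x => ((Function.extend Subtype.val (u ∘ ι) 0 x : ℝ) : EReal)) := by
  intro η L hL hηΩ hη
  let γ : ℝ → Z := fun t =>
    Function.extend Subtype.val ι (fun _ => ι ⟨η 0, hηΩ (left_mem_Icc.2 hL.le)⟩) (η t)
  have hγ : ∀ t (ht : t ∈ Icc 0 L), γ t = ι ⟨η t, hηΩ ht⟩ := fun t ht =>
    Subtype.val_injective.extend_apply ι _ ⟨η t, hηΩ ht⟩
  have hext : ∀ {α : Type} (f : Z → α) (e : X → α) t, t ∈ Icc 0 L →
      Function.extend Subtype.val (f ∘ ι) e (η t) = f (γ t) := fun f e t ht => by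
    rw [hγ t ht]
    exact Subtype.val_injective.extend_apply (f ∘ ι) e ⟨η t, hηΩ ht⟩
  have hγS : MapsTo γ (Icc 0 L) (range ι) := fun t ht => hγ t ht ▸ mem_range_self _
  have hγarc := (isArcLengthParamWith_iff_of_edist_eq_mazDist (γ := γ)
    hη.lipschitzOnWith.continuousOn hηΩ fun s hs t ht => by rw [hγ s hs, hγ t ht, hι]).2 hη
  dsimp only
  rw [hext u 0 L (right_mem_Icc.2 hL.le), hext u 0 0 (left_mem_Icc.2 hL.le),
    setLIntegral_congr_fun measurableSet_Icc fun t ht => hext g 0 t ht]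
  exact h γ L hL hγS hγarc

section Capacity

variable [MeasurableSpace X] [BorelSpace X] [MeasurableSpace Z] [BorelSpace Z]
  {μ : Measure X} {ν : Measure Z} {p : ℝ}

lemma bCpOn_preimage_le (hι : ∀ x y : Ω, edist (ι x) (ι y) = mazDist Ω x y)
    (hιc : Continuous ι) (hdense : DenseRange ι) (hΦ : LipschitzWith 1 Φ)
    (hΦι : ∀ x : Ω, Φ (ι x) = x)
    (hlintegral : ∀ F : Z → ℝ≥0∞, Measurable F → ∀ H : X → ℝ≥0∞, (∀ x : Ω, F (ι x) = H x) →
      ∫⁻ z in range ι, F z ∂ν = ∫⁻ x in Ω, H x ∂μ) (E : Set X) :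
    bCpOn ν p (range ι) (Φ ⁻¹' E) ≤ bCpOn μ p Ω E := by
  have hΦm : Measurable Φ := hΦ.continuous.measurable
  refine le_iInf₂ fun u ⟨⟨hum, hufin⟩, hu1, hu2⟩ => ?_
  have henergy : npEnergyOn ν p (range ι) (u ∘ Φ) ≤ npEnergyOn μ p Ω u :=
    npEnergyOn_le_of_forall_isUpperGradientOn
      (hlintegral _ (by fun_prop) _ fun x => by simp [hΦι]).le fun g hgm hg =>
        ⟨g ∘ Φ, hgm.comp hΦm, hg.comp_of_edist_eq_mazDist hι hΦ hΦι,
          (hlintegral _ (by fun_prop) _ fun x => by simp [hΦι]).le⟩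
  refine (iInf₂_le (u ∘ Φ) ⟨⟨hum.comp hΦm, ne_top_of_le_ne_top hufin henergy⟩, ?_, ?_⟩).trans
    henergy
  · rintro z ⟨hzE, hz⟩
    exact hu1 _ ⟨hzE, mapsTo_range_of_map_eq hΦι hz⟩
  · rintro z ⟨hzE, -, hz⟩
    refine le_liminf_comp_of_le_liminf hΦ.continuous hΦι (hu2 _ ⟨hzE, ?_, fun h => ?_⟩)
    · exact map_mem_closure hΦ.continuous (hdense z) (mapsTo_range_of_map_eq hΦι)
    · exact hz ⟨_, map_eq_of_map_mem hdense hιc hΦ.continuous hΦι h⟩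

lemma bCpOn_le_preimage [CompleteSpace Z] (hΩ : IsOpen Ω) (hfc : FinConnAtBoundary Ω)
    (hι : ∀ x y : Ω, edist (ι x) (ι y) = mazDist Ω x y) (hιc : Continuous ι)
    (hdense : DenseRange ι) (hΦ : Continuous Φ) (hΦι : ∀ x : Ω, Φ (ι x) = x)
    (hlintegral : ∀ F : Z → ℝ≥0∞, Measurable F → ∀ H : X → ℝ≥0∞, (∀ x : Ω, F (ι x) = H x) →
      ∫⁻ z in range ι, F z ∂ν = ∫⁻ x in Ω, H x ∂μ) (E : Set X) :
    bCpOn μ p Ω E ≤ bCpOn ν p (range ι) (Φ ⁻¹' E) := by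
  have hemb := MeasurableEmbedding.subtype_coe hΩ.measurableSet
  have hιm : Measurable ι := hιc.measurable
  refine le_iInf₂ fun u ⟨⟨hum, hufin⟩, hu1, hu2⟩ => ?_
  set v := Function.extend Subtype.val (u ∘ ι) 0
  have hv : ∀ x : Ω, v x = u (ι x) := Subtype.val_injective.extend_apply _ _
  have henergy : npEnergyOn μ p Ω v ≤ npEnergyOn ν p (range ι) u :=
    npEnergyOn_le_of_forall_isUpperGradientOn
      (hlintegral _ (by fun_prop) _ fun x => by rw [hv]).ge fun g hgm hg =>
        ⟨_, hemb.measurable_extend (hgm.comp hιm) measurable_const,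
          hg.extend_of_edist_eq_mazDist hι,
          (hlintegral (fun z => g z ^ p) (by fun_prop)
            (fun x => Function.extend Subtype.val (g ∘ ι) 0 x ^ p) fun x => by
              rw [Subtype.val_injective.extend_apply, Function.comp_apply]).ge⟩
  refine (iInf₂_le v ⟨⟨hemb.measurable_extend (hum.comp hιm) measurable_const,
    ne_top_of_le_ne_top hufin henergy⟩, ?_, ?_⟩).trans henergy
  · rintro x ⟨hxE, hxΩ⟩
    rw [show v x = u (ι ⟨x, hxΩ⟩) from hv ⟨x, hxΩ⟩]
    exact hu1 _ ⟨by rwa [mem_preimage, hΦι], mem_range_self _⟩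
  · rintro x ⟨hxE, hx⟩
    exact le_liminf_extend_of_mem_frontier hΩ hfc hι hΦ hΦι hx fun z hzx hz =>
      hu2 z ⟨by rwa [mem_preimage, hzx], hdense z, hz⟩

end Capacity

end MazurkiewiczCompletion

theorem statement15_general {X : Type*} [MetricSpace X] [ProperSpace X]
    [LocallyConnectedSpace X] [MeasurableSpace X] [BorelSpace X]
    (μ : Measure X)
    (p : ℝ)
    (Ω : Set X) (hΩ : IsBoundedDomain Ω) (hfc : FinConnAtBoundary Ω)
    (Z : Type*) [MetricSpace Z] [CompleteSpace Z] [MeasurableSpace Z] [BorelSpace Z]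
    (ι : Ω → Z) (hι : ∀ x y : Ω, edist (ι x) (ι y) = mazDist Ω (x : X) (y : X))
    (hdense : DenseRange ι) (ν : Measure Z)
    (hν : ∀ A : Set Z, MeasurableSet A → ν A = μ (Subtype.val '' (ι ⁻¹' A)))
    (Φ : Z → X) (hΦ : LipschitzWith 1 Φ) (hΦι : ∀ x : Ω, Φ (ι x) = (x : X))
    (E : Set X) :
    bCpOn ν p (Set.range ι) (Φ ⁻¹' E) = bCpOn μ p Ω E := by
  obtain ⟨hΩo, -, -⟩ := hΩ
  have hιc : Continuous ι := continuous_of_edist_eq_mazDist hΩo hι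
  have : SigmaCompactSpace Ω := by
    have := hΩo.locallyCompactSpace
    infer_instance
  have hlintegral : ∀ F : Z → ℝ≥0∞, Measurable F → ∀ H : X → ℝ≥0∞,
      (∀ x : Ω, F (ι x) = H x) → ∫⁻ z in range ι, F z ∂ν = ∫⁻ x in Ω, H x ∂μ :=
    fun F hF H hFH => setLIntegral_range_eq hΩo.measurableSet hιc.measurable
      (isSigmaCompact_range hιc).measurableSet hν hF hFH
  exact le_antisymm (bCpOn_preimage_le hι hιc hdense hΦ hΦι hlintegral E)
    (bCpOn_le_preimage hΩo hfc hι hιc hdense hΦ.continuous hΦι hlintegral E)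

theorem statement15 {X : Type*} [MetricSpace X] [ProperSpace X]
    [LocallyConnectedSpace X] [MeasurableSpace X] [BorelSpace X]
    (μ : Measure X) (hμc : μ.IsComplete) (hball : BallRegular μ)
    (p : ℝ) (hp : 1 ≤ p)
    (Ω : Set X) (hΩ : IsBoundedDomain Ω) (hfc : FinConnAtBoundary Ω)
    (Z : Type*) [MetricSpace Z] [CompleteSpace Z] [MeasurableSpace Z] [BorelSpace Z]
    (ι : Ω → Z) (hι : ∀ x y : Ω, edist (ι x) (ι y) = mazDist Ω (x : X) (y : X))
    (hdense : DenseRange ι) (ν : Measure Z)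
    (hν : ∀ A : Set Z, MeasurableSet A → ν A = μ (Subtype.val '' (ι ⁻¹' A)))
    (Φ : Z → X) (hΦ : LipschitzWith 1 Φ) (hΦι : ∀ x : Ω, Φ (ι x) = (x : X))
    (E : Set X) (hE : E ⊆ closure Ω) :
    bCpOn ν p (Set.range ι) (Φ ⁻¹' E) = bCpOn μ p Ω E :=
  statement15_general μ p Ω hΩ hfc Z ι hι hdense ν hν Φ hΦ hΦι E

end
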